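/- arXiv:1804.00783 — 2 statements merged into one kernel-verified Lean document; each statement's English description precedes it below -/
import Mathlib

section
/- Let K be a finite CW-complex with a discrete Morse function having m_i critical cells in dimension i. Then m_i ≥ b_i(K; F) for every field F and every i (the discrete Morse inequalities). -/
/-- A finite abstract simplicial complex on vertex set `V`: a collection of
nonempty finite sets closed under passing to nonempty subsets.
A set of `i + 1` vertices is a cell of dimension `i`. -/
def IsComplex {V : Type} [DecidableEq V] (K : Finset (Finset V)) : Prop :=
  ∀ s ∈ K, s ≠ ∅ ∧ ∀ t ⊆ s, t ≠ ∅ → t ∈ K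

/-- `f` is a discrete Morse function on `K`: every cell has at most one
codimension-one coface with smaller or equal value and at most one
codimension-one face with greater or equal value. -/
def IsDiscreteMorse {V : Type} [DecidableEq V] (K : Finset (Finset V))
    (f : Finset V → ℝ) : Prop :=
  ∀ σ ∈ K,
    (K.filter fun τ => σ ⊆ τ ∧ τ.card = σ.card + 1 ∧ f τ ≤ f σ).card ≤ 1 ∧
    (K.filter fun ν => ν ⊆ σ ∧ ν.card + 1 = σ.card ∧ f σ ≤ f ν).card ≤ 1

/-- A cell is critical for `f` if it has no codimension-one coface with smaller
or equal value and no codimension-one face with greater or equal value. -/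
def IsCritical {V : Type} [DecidableEq V] (K : Finset (Finset V))
    (f : Finset V → ℝ) (σ : Finset V) : Prop :=
  σ ∈ K ∧
    (K.filter fun τ => σ ⊆ τ ∧ τ.card = σ.card + 1 ∧ f τ ≤ f σ) = ∅ ∧
    (K.filter fun ν => ν ⊆ σ ∧ ν.card + 1 = σ.card ∧ f σ ≤ f ν) = ∅

open scoped Classical in
/-- The number of critical cells of dimension `i`. -/
noncomputable def numCritical {V : Type} [DecidableEq V] (K : Finset (Finset V))
    (f : Finset V → ℝ) (i : ℕ) : ℕ :=
  (K.filter fun σ => IsCritical K f σ ∧ σ.card = i + 1).card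

/-- The `i`-dimensional cells of `K`. -/
def cellsOf {V : Type} [DecidableEq V] (K : Finset (Finset V)) (i : ℕ) :
    Finset (Finset V) :=
  K.filter fun s => s.card = i + 1

/-- The matrix of the simplicial boundary map from `(p+1)`-chains to `p`-chains,
with the usual signs determined by the ordering of the vertices. -/
noncomputable def boundaryMatrix {V : Type} [DecidableEq V] [LinearOrder V] [Fintype V]
    (R : Type) [CommRing R] (K : Finset (Finset V)) (p : ℕ) :
    Matrix {ν // ν ∈ cellsOf K p} {σ // σ ∈ cellsOf K (p + 1)} R :=
  fun ν σ =>
    if (ν : Finset V) ⊆ (σ : Finset V) then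
      ∑ v ∈ (σ : Finset V) \ (ν : Finset V),
        (-1 : R) ^ ((σ : Finset V).filter (fun w => w < v)).card
    else 0

/-- Simplicial `p`-cycles of `K` with coefficients in `R`. -/
noncomputable def simplicialCycles {V : Type} [DecidableEq V] [LinearOrder V] [Fintype V]
    (R : Type) [CommRing R] (K : Finset (Finset V)) :
    ∀ p : ℕ, Submodule R ({σ // σ ∈ cellsOf K p} → R)
  | 0 => ⊤
  | p + 1 => LinearMap.ker (Matrix.toLin' (boundaryMatrix R K p))

/-- Simplicial `p`-boundaries of `K` with coefficients in `R`. -/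
noncomputable def simplicialBoundaries {V : Type} [DecidableEq V] [LinearOrder V] [Fintype V]
    (R : Type) [CommRing R] (K : Finset (Finset V)) (p : ℕ) :
    Submodule R ({σ // σ ∈ cellsOf K p} → R) :=
  LinearMap.range (Matrix.toLin' (boundaryMatrix R K p))

/-- Simplicial homology of `K` in degree `p` with coefficients in `R`. -/
noncomputable abbrev simplicialHomology {V : Type} [DecidableEq V] [LinearOrder V] [Fintype V]
    (R : Type) [CommRing R] (K : Finset (Finset V)) (p : ℕ) :=
  (simplicialCycles R K p) ⧸
    ((simplicialBoundaries R K p).comap (simplicialCycles R K p).subtype)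


section Aux
variable {V : Type} [DecidableEq V] [LinearOrder V] [Fintype V]
variable {F : Type} [Field F]

lemma mem_cellsOf' {K : Finset (Finset V)} {p : ℕ} {s : Finset V} :
    s ∈ cellsOf K p ↔ s ∈ K ∧ s.card = p + 1 := Finset.mem_filter

lemma bM_ne_zero_sub {K : Finset (Finset V)} {p : ℕ}
    {ν : {ν // ν ∈ cellsOf K p}} {σ : {σ // σ ∈ cellsOf K (p+1)}}
    (h : boundaryMatrix F K p ν σ ≠ 0) : (ν : Finset V) ⊆ (σ : Finset V) := by
  by_contra hc
  exact h (by simp [boundaryMatrix, hc])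

lemma bM_apply_singleton {K : Finset (Finset V)} {p : ℕ}
    (ν : {ν // ν ∈ cellsOf K p}) (σ : {σ // σ ∈ cellsOf K (p+1)})
    (h : (ν : Finset V) ⊆ (σ : Finset V)) {x : V}
    (hx : (σ : Finset V) \ (ν : Finset V) = {x}) :
    boundaryMatrix F K p ν σ
      = (-1 : F) ^ (((σ : Finset V)).filter (fun w => w < x)).card := by
  simp [boundaryMatrix, h, hx]

lemma sdiff_card_one {K : Finset (Finset V)} {p : ℕ}
    (ν : {ν // ν ∈ cellsOf K p}) (σ : {σ // σ ∈ cellsOf K (p+1)})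
    (h : (ν : Finset V) ⊆ (σ : Finset V)) :
    ∃ x : V, (σ : Finset V) \ (ν : Finset V) = {x} := by
  have hν := (mem_cellsOf'.mp ν.2).2
  have hσ := (mem_cellsOf'.mp σ.2).2
  have : ((σ : Finset V) \ (ν : Finset V)).card = 1 := by
    rw [Finset.card_sdiff_of_subset h, hσ, hν]; omega
  exact Finset.card_eq_one.mp this

lemma bM_diag_ne_zero {K : Finset (Finset V)} {p : ℕ}
    (ν : {ν // ν ∈ cellsOf K p}) (σ : {σ // σ ∈ cellsOf K (p+1)})
    (h : (ν : Finset V) ⊆ (σ : Finset V)) :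
    boundaryMatrix F K p ν σ ≠ 0 := by
  obtain ⟨x, hx⟩ := sdiff_card_one ν σ h
  rw [bM_apply_singleton ν σ h hx]
  exact pow_ne_zero _ (by norm_num)

lemma linearIndependent_of_triangular {ι α : Type} [Fintype ι] [Fintype α]
    (v : ι → α → F) (g : ι → α) (w : ι → ℝ)
    (hd : ∀ s, v s (g s) ≠ 0)
    (ht : ∀ s t, s ≠ t → v t (g s) ≠ 0 → w s < w t) :
    LinearIndependent F v := by
  classical
  rw [Fintype.linearIndependent_iff]
  intro c hc
  by_contra hne
  push_neg at hne
  obtain ⟨i, hi⟩ := hne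
  have hsupp : (Finset.univ.filter fun s => c s ≠ 0).Nonempty :=
    ⟨i, by simp [hi]⟩
  obtain ⟨s₀, hs₀m, hs₀max⟩ := Finset.exists_max_image _ w hsupp
  have hc0 : c s₀ ≠ 0 := (Finset.mem_filter.mp hs₀m).2
  have h2 : ∑ s, c s * v s (g s₀) = 0 := by
    have := congrFun hc (g s₀)
    simpa [Finset.sum_apply] using this
  have h3 : ∀ s ∈ Finset.univ, s ≠ s₀ → c s * v s (g s₀) = 0 := by
    intro s _ hs
    by_contra hns
    have hcs : c s ≠ 0 := fun h => hns (by simp [h])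
    have hvs : v s (g s₀) ≠ 0 := fun h => hns (by simp [h])
    have hlt := ht s₀ s (fun h => hs h.symm) hvs
    have hle := hs₀max s (Finset.mem_filter.mpr ⟨Finset.mem_univ s, hcs⟩)
    linarith
  rw [Finset.sum_eq_single_of_mem s₀ (Finset.mem_univ s₀) h3] at h2
  exact mul_ne_zero hc0 (hd s₀) h2

lemma card_le_finrank_range {K : Finset (Finset V)} (p : ℕ) (S : Finset (Finset V))
    (c r : Finset V → Finset V) (w : Finset V → ℝ)
    (hc : ∀ s ∈ S, c s ∈ cellsOf K (p+1))
    (hr : ∀ s ∈ S, r s ∈ cellsOf K p)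
    (hd : ∀ s ∈ S, r s ⊆ c s)
    (ht : ∀ s ∈ S, ∀ t ∈ S, s ≠ t → r s ⊆ c t → w s < w t) :
    S.card ≤ Module.finrank F
      (LinearMap.range (Matrix.toLin' (boundaryMatrix F K p))) := by
  classical
  set M := boundaryMatrix F K p with hM
  set B := LinearMap.range (Matrix.toLin' M) with hB
  have hvmem : ∀ s : {x // x ∈ S},
      Matrix.toLin' M (Pi.single (⟨c s, hc s s.2⟩ : {σ // σ ∈ cellsOf K (p+1)}) (1:F)) ∈ B :=
    fun s => ⟨_, rfl⟩
  set v : {x // x ∈ S} → B := fun s => ⟨_, hvmem s⟩ with hv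
  have happly : ∀ (s : {x // x ∈ S}) (ρ : {ν // ν ∈ cellsOf K p}),
      (v s : {ν // ν ∈ cellsOf K p} → F) ρ = M ρ ⟨c s, hc s s.2⟩ := by
    intro s ρ
    show (Matrix.toLin' M (Pi.single _ 1)) ρ = _
    rw [Matrix.toLin'_apply, Matrix.mulVec_single]
    exact mul_one _
  have hli : LinearIndependent F
      (fun s : {x // x ∈ S} => (v s : {ν // ν ∈ cellsOf K p} → F)) := by
    apply linearIndependent_of_triangular
      (g := fun s : {x // x ∈ S} => (⟨r s, hr s s.2⟩ : {ν // ν ∈ cellsOf K p}))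
      (w := fun s => w s)
    · intro s
      rw [happly]
      exact bM_diag_ne_zero _ _ (hd s s.2)
    · intro s t hst hne
      rw [happly] at hne
      have hsub : (r s : Finset V) ⊆ c t := bM_ne_zero_sub hne
      exact ht s s.2 t t.2 (fun h => hst (Subtype.ext h)) hsub
  have hli' : LinearIndependent F v := hli.of_comp B.subtype
  have := hli'.fintype_card_le_finrank
  simpa [Fintype.card_coe] using this

lemma bM_mul_bM {K : Finset (Finset V)} (hK : IsComplex K) (p : ℕ) :
    boundaryMatrix F K p * boundaryMatrix F K (p+1) = 0 := by
  classical
  ext ρ σ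
  rw [Matrix.mul_apply, Matrix.zero_apply]
  have hρ := mem_cellsOf'.mp ρ.2
  have hσ := mem_cellsOf'.mp σ.2
  by_cases hsub : (ρ : Finset V) ⊆ (σ : Finset V)
  case neg =>
    apply Finset.sum_eq_zero
    intro ν _
    by_contra h
    have h1 : (ρ : Finset V) ⊆ (ν : Finset V) := bM_ne_zero_sub (left_ne_zero_of_mul h)
    have h2 : (ν : Finset V) ⊆ (σ : Finset V) := bM_ne_zero_sub (right_ne_zero_of_mul h)
    exact hsub (h1.trans h2)
  case pos =>
    have hcard2 : ((σ : Finset V) \ (ρ : Finset V)).card = 2 := by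
      rw [Finset.card_sdiff_of_subset hsub, hσ.2, hρ.2]; omega
    obtain ⟨x, y, hxy, hset⟩ := Finset.card_eq_two.mp hcard2
    -- wlog x < y
    wlog hlt : x < y generalizing x y
    · exact this y x hxy.symm (by rw [hset, Finset.pair_comm]) (by
        rcases lt_or_gt_of_ne hxy with h | h
        · exact absurd h hlt
        · exact h)
    have hxσ : x ∈ (σ : Finset V) := (Finset.mem_sdiff.mp (hset ▸ Finset.mem_insert_self x {y})).1
    have hxρ : x ∉ (ρ : Finset V) := (Finset.mem_sdiff.mp (hset ▸ Finset.mem_insert_self x {y})).2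
    have hymem : y ∈ (σ : Finset V) \ (ρ : Finset V) := hset ▸ Finset.mem_insert_of_mem (Finset.mem_singleton_self y)
    have hyσ : y ∈ (σ : Finset V) := (Finset.mem_sdiff.mp hymem).1
    have hyρ : y ∉ (ρ : Finset V) := (Finset.mem_sdiff.mp hymem).2
    set ν₁ : Finset V := (σ : Finset V).erase y with hν₁
    set ν₂ : Finset V := (σ : Finset V).erase x with hν₂
    have hν₁card : ν₁.card = p + 2 := by
      rw [hν₁, Finset.card_erase_of_mem hyσ, hσ.2]; omega
    have hν₂card : ν₂.card = p + 2 := by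
      rw [hν₂, Finset.card_erase_of_mem hxσ, hσ.2]; omega
    have hν₁K : ν₁ ∈ cellsOf K (p+1) := by
      refine mem_cellsOf'.mpr ⟨(hK _ hσ.1).2 _ (Finset.erase_subset _ _) ?_, hν₁card⟩
      exact Finset.nonempty_iff_ne_empty.mp (Finset.card_pos.mp (by omega))
    have hν₂K : ν₂ ∈ cellsOf K (p+1) := by
      refine mem_cellsOf'.mpr ⟨(hK _ hσ.1).2 _ (Finset.erase_subset _ _) ?_, hν₂card⟩
      exact Finset.nonempty_iff_ne_empty.mp (Finset.card_pos.mp (by omega))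
    set n₁ : {ν // ν ∈ cellsOf K (p+1)} := ⟨ν₁, hν₁K⟩ with hn₁
    set n₂ : {ν // ν ∈ cellsOf K (p+1)} := ⟨ν₂, hν₂K⟩ with hn₂
    have hne12 : n₁ ≠ n₂ := by
      intro h
      have : ν₁ = ν₂ := congrArg Subtype.val h
      have hx1 : x ∈ ν₁ := Finset.mem_erase.mpr ⟨hxy, hxσ⟩
      rw [this] at hx1
      exact (Finset.notMem_erase x _) hx1
    have hvanish : ∀ ν : {ν // ν ∈ cellsOf K (p+1)}, ν ∈ Finset.univ →
        ν ∉ ({n₁, n₂} : Finset {ν // ν ∈ cellsOf K (p+1)}) →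
        boundaryMatrix F K p ρ ν * boundaryMatrix F K (p+1) ν σ = 0 := by
      intro ν _ hν
      by_contra h
      have h1 : (ρ : Finset V) ⊆ (ν : Finset V) := bM_ne_zero_sub (left_ne_zero_of_mul h)
      have h2 : (ν : Finset V) ⊆ (σ : Finset V) := bM_ne_zero_sub (right_ne_zero_of_mul h)
      obtain ⟨z, hz⟩ := sdiff_card_one ν σ h2
      have hzρ : z ∉ (ρ : Finset V) := by
        intro hz'
        have : z ∈ (ν : Finset V) := h1 hz'
        have : z ∉ (ν : Finset V) := (Finset.mem_sdiff.mp (hz ▸ Finset.mem_singleton_self z)).2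
        contradiction
      have hzσ : z ∈ (σ : Finset V) := (Finset.mem_sdiff.mp (hz ▸ Finset.mem_singleton_self z)).1
      have hzxy : z ∈ ({x, y} : Finset V) := hset ▸ Finset.mem_sdiff.mpr ⟨hzσ, hzρ⟩
      have hνval : (ν : Finset V) = (σ : Finset V).erase z := by
        rw [Finset.erase_eq, ← hz, Finset.sdiff_sdiff_eq_self h2]
      rcases Finset.mem_insert.mp hzxy with rfl | hzy
      · exact hν (Finset.mem_insert_of_mem (Finset.mem_singleton.mpr (Subtype.ext hνval)))
      · rw [Finset.mem_singleton.mp hzy] at hνval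
        exact hν (Finset.mem_insert.mpr (Or.inl (Subtype.ext hνval)))
    have hsum : ∑ ν : {ν // ν ∈ cellsOf K (p+1)},
        boundaryMatrix F K p ρ ν * boundaryMatrix F K (p+1) ν σ
        = ∑ ν ∈ ({n₁, n₂} : Finset {ν // ν ∈ cellsOf K (p+1)}),
          boundaryMatrix F K p ρ ν * boundaryMatrix F K (p+1) ν σ :=
      (Finset.sum_subset (Finset.subset_univ _) hvanish).symm
    rw [hsum, Finset.sum_pair hne12]
    -- now compute the four entries
    have hρν₁ : (ρ : Finset V) ⊆ ν₁ := Finset.subset_erase.mpr ⟨hsub, hyρ⟩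
    have hρν₂ : (ρ : Finset V) ⊆ ν₂ := Finset.subset_erase.mpr ⟨hsub, hxρ⟩
    have hν₁σ : ν₁ ⊆ (σ : Finset V) := Finset.erase_subset _ _
    have hν₂σ : ν₂ ⊆ (σ : Finset V) := Finset.erase_subset _ _
    have hd₁ : ν₁ \ (ρ : Finset V) = {x} := by
      rw [hν₁, Finset.erase_sdiff_comm, hset]
      rw [Finset.pair_comm, Finset.erase_insert (by simp [hxy.symm])]
    have hd₂ : ν₂ \ (ρ : Finset V) = {y} := by
      rw [hν₂, Finset.erase_sdiff_comm, hset]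
      rw [Finset.erase_insert (by simp [hxy])]
    have hs₁ : (σ : Finset V) \ ν₁ = {y} := Finset.sdiff_erase_self hyσ
    have hs₂ : (σ : Finset V) \ ν₂ = {x} := Finset.sdiff_erase_self hxσ
    rw [bM_apply_singleton ρ n₁ hρν₁ hd₁, bM_apply_singleton ρ n₂ hρν₂ hd₂,
        bM_apply_singleton n₁ σ hν₁σ hs₁, bM_apply_singleton n₂ σ hν₂σ hs₂]
    -- counts
    have hc₁ : (ν₁.filter (fun w => w < x)).card = ((σ : Finset V).filter (fun w => w < x)).card := by
      rw [hν₁, Finset.filter_erase, Finset.erase_eq_of_notMem]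
      simp only [Finset.mem_filter]
      rintro ⟨-, hyx⟩
      exact absurd hlt (not_lt.mpr hyx.le)
    have hc₂ : ((σ : Finset V).filter (fun w => w < y)).card
        = (ν₂.filter (fun w => w < y)).card + 1 := by
      rw [hν₂, Finset.filter_erase]
      have hxmem : x ∈ Finset.filter (fun w => w < y) (σ : Finset V) :=
        Finset.mem_filter.mpr ⟨hxσ, hlt⟩
      exact (Finset.card_erase_add_one hxmem).symm
    rw [hc₁, hc₂]
    ring
end Aux


section Main
variable {V : Type} [DecidableEq V] [LinearOrder V] [Fintype V]

theorem aux_main (K : Finset (Finset V)) (hK : IsComplex K)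
    (f : Finset V → ℝ) (hf : IsDiscreteMorse K f)
    (F : Type) [Field F] (i : ℕ) :
    Module.finrank F (simplicialHomology F K i) ≤ numCritical K f i := by
  classical
  set U : Finset (Finset V) := (cellsOf K i).filter
    (fun σ => (K.filter fun τ => σ ⊆ τ ∧ τ.card = σ.card + 1 ∧ f τ ≤ f σ).Nonempty) with hU
  set D : Finset (Finset V) := (cellsOf K i).filter
    (fun σ => (K.filter fun ν => ν ⊆ σ ∧ ν.card + 1 = σ.card ∧ f σ ≤ f ν).Nonempty) with hD
  -- covering bound
  have hcover : (cellsOf K i).card ≤ numCritical K f i + U.card + D.card := by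
    have hsub : cellsOf K i ⊆
        ((K.filter fun σ => IsCritical K f σ ∧ σ.card = i + 1) ∪ U) ∪ D := by
      intro σ hσ
      obtain ⟨hσK, hσc⟩ := mem_cellsOf'.mp hσ
      by_cases h1 : (K.filter fun τ => σ ⊆ τ ∧ τ.card = σ.card + 1 ∧ f τ ≤ f σ) = ∅
      · by_cases h2 : (K.filter fun ν => ν ⊆ σ ∧ ν.card + 1 = σ.card ∧ f σ ≤ f ν) = ∅
        · exact Finset.mem_union_left _ (Finset.mem_union_left _
            (Finset.mem_filter.mpr ⟨hσK, ⟨hσK, h1, h2⟩, hσc⟩))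
        · exact Finset.mem_union_right _
            (Finset.mem_filter.mpr ⟨hσ, Finset.nonempty_iff_ne_empty.mpr h2⟩)
      · exact Finset.mem_union_left _ (Finset.mem_union_right _
          (Finset.mem_filter.mpr ⟨hσ, Finset.nonempty_iff_ne_empty.mpr h1⟩))
    have h3 := Finset.card_le_card hsub
    have h4 := Finset.card_union_le
      ((K.filter fun σ => IsCritical K f σ ∧ σ.card = i + 1) ∪ U) D
    have h5 := Finset.card_union_le (K.filter fun σ => IsCritical K f σ ∧ σ.card = i + 1) U
    have h6 : numCritical K f i = (K.filter fun σ => IsCritical K f σ ∧ σ.card = i + 1).card := by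
      unfold numCritical
      congr 1
    omega
  -- the up partner function
  set t : Finset V → Finset V := fun σ =>
    if h : (K.filter fun τ => σ ⊆ τ ∧ τ.card = σ.card + 1 ∧ f τ ≤ f σ).Nonempty
    then h.choose else ∅ with htdef
  have htmem : ∀ σ ∈ U, t σ ∈ K ∧ σ ⊆ t σ ∧ (t σ).card = σ.card + 1 ∧ f (t σ) ≤ f σ := by
    intro σ hσ
    have h := (Finset.mem_filter.mp hσ).2
    have ht : t σ = h.choose := by rw [htdef]; exact dif_pos h
    rw [ht]
    have := h.choose_spec
    rw [Finset.mem_filter] at this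
    exact ⟨this.1, this.2.1, this.2.2.1, this.2.2.2⟩
  -- the down partner function
  set nb : Finset V → Finset V := fun σ =>
    if h : (K.filter fun ν => ν ⊆ σ ∧ ν.card + 1 = σ.card ∧ f σ ≤ f ν).Nonempty
    then h.choose else ∅ with hnbdef
  have hnbmem : ∀ σ ∈ D, nb σ ∈ K ∧ nb σ ⊆ σ ∧ (nb σ).card + 1 = σ.card ∧ f σ ≤ f (nb σ) := by
    intro σ hσ
    have h := (Finset.mem_filter.mp hσ).2
    have hn : nb σ = h.choose := by rw [hnbdef]; exact dif_pos h
    rw [hn]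
    have := h.choose_spec
    rw [Finset.mem_filter] at this
    exact ⟨this.1, this.2.1, this.2.2.1, this.2.2.2⟩
  have hUcells : ∀ σ ∈ U, σ ∈ K ∧ σ.card = i + 1 := by
    intro σ hσ; exact mem_cellsOf'.mp (Finset.mem_filter.mp hσ).1
  have hDcells : ∀ σ ∈ D, σ ∈ K ∧ σ.card = i + 1 := by
    intro σ hσ; exact mem_cellsOf'.mp (Finset.mem_filter.mp hσ).1
  -- U bound
  have hUcard : U.card ≤ Module.finrank F
      (LinearMap.range (Matrix.toLin' (boundaryMatrix F K i))) := by
    apply card_le_finrank_range (K := K) i U t id f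
    · intro s hs
      obtain ⟨h1, h2, h3, h4⟩ := htmem s hs
      have hsc := (hUcells s hs).2
      exact mem_cellsOf'.mpr ⟨h1, by omega⟩
    · intro s hs
      exact mem_cellsOf'.mpr ⟨(hUcells s hs).1, (hUcells s hs).2⟩
    · intro s hs
      exact (htmem s hs).2.1
    · intro s hs t' ht' hne hsub
      obtain ⟨htK, hsubt', hct', hft'⟩ := htmem t' ht'
      obtain ⟨hsK, hsc⟩ := hUcells s hs
      obtain ⟨ht'K, ht'c⟩ := hUcells t' ht'
      by_contra hnlt
      push_neg at hnlt
      have hfs : f (t t') ≤ f s := le_trans hft' (le_trans hnlt (le_refl _))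
      have hmem1 : s ∈ K.filter fun ν => ν ⊆ t t' ∧ ν.card + 1 = (t t').card ∧ f (t t') ≤ f ν :=
        Finset.mem_filter.mpr ⟨hsK, hsub, by omega, hfs⟩
      have hmem2 : t' ∈ K.filter fun ν => ν ⊆ t t' ∧ ν.card + 1 = (t t').card ∧ f (t t') ≤ f ν :=
        Finset.mem_filter.mpr ⟨ht'K, hsubt', by omega, hft'⟩
      have hlt := Finset.one_lt_card.mpr ⟨s, hmem1, t', hmem2, hne⟩
      have := (hf (t t') htK).2
      omega
  -- D is empty in degree 0
  have hD0 : i = 0 → D = ∅ := by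
    intro hi
    rw [hD]
    apply Finset.filter_eq_empty_iff.mpr
    intro σ hσ hne
    obtain ⟨ν, hν⟩ := hne
    obtain ⟨hνK, hνsub, hνcard, hνf⟩ := Finset.mem_filter.mp hν
    have hσc := (mem_cellsOf'.mp hσ).2
    have hν0 : ν = ∅ := Finset.card_eq_zero.mp (by omega)
    exact (hK ν hνK).1 hν0
  -- D bound in positive degrees
  have hDcard : ∀ p : ℕ, i = p + 1 → D.card ≤ Module.finrank F
      (LinearMap.range (Matrix.toLin' (boundaryMatrix F K p))) := by
    intro p hip
    subst hip
    apply card_le_finrank_range (K := K) p D id nb (fun σ => f (nb σ))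
    · intro s hs
      exact mem_cellsOf'.mpr ⟨(hDcells s hs).1, (hDcells s hs).2⟩
    · intro s hs
      obtain ⟨h1, h2, h3, h4⟩ := hnbmem s hs
      have hsc := (hDcells s hs).2
      exact mem_cellsOf'.mpr ⟨h1, by omega⟩
    · intro s hs
      exact (hnbmem s hs).2.1
    · intro s hs t' ht' hne hsub
      obtain ⟨hnsK, hnssub, hnsc, hnsf⟩ := hnbmem s hs
      obtain ⟨hntK, hntsub, hntc, hntf⟩ := hnbmem t' ht'
      obtain ⟨hsK, hsc⟩ := hDcells s hs
      obtain ⟨ht'K, ht'c⟩ := hDcells t' ht'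
      -- nb s ≠ nb t'
      have hnbne : nb s ≠ nb t' := by
        intro heq
        have hmem1 : s ∈ K.filter fun τ => nb s ⊆ τ ∧ τ.card = (nb s).card + 1 ∧ f τ ≤ f (nb s) :=
          Finset.mem_filter.mpr ⟨hsK, hnssub, by omega, hnsf⟩
        have hmem2 : t' ∈ K.filter fun τ => nb s ⊆ τ ∧ τ.card = (nb s).card + 1 ∧ f τ ≤ f (nb s) := by
          refine Finset.mem_filter.mpr ⟨ht'K, ?_, by rw [heq]; omega, ?_⟩
          · rw [heq]; exact hntsub
          · rw [heq]; exact hntf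
        have hlt := Finset.one_lt_card.mpr ⟨s, hmem1, t', hmem2, hne⟩
        have := (hf (nb s) hnsK).1
        omega
      by_contra hnlt
      push_neg at hnlt
      have hfts : f t' ≤ f (nb s) := le_trans hntf hnlt
      have hmem1 : nb s ∈ K.filter fun ν => ν ⊆ t' ∧ ν.card + 1 = t'.card ∧ f t' ≤ f ν :=
        Finset.mem_filter.mpr ⟨hnsK, hsub, by omega, hfts⟩
      have hmem2 : nb t' ∈ K.filter fun ν => ν ⊆ t' ∧ ν.card + 1 = t'.card ∧ f t' ≤ f ν :=
        Finset.mem_filter.mpr ⟨hntK, hntsub, by omega, hntf⟩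
      have hlt := Finset.one_lt_card.mpr ⟨nb s, hmem1, nb t', hmem2, hnbne⟩
      have := (hf t' ht'K).2
      omega
  -- boundaries ⊆ cycles
  have hBZ : simplicialBoundaries F K i ≤ simplicialCycles F K i := by
    cases i with
    | zero => exact le_top
    | succ p =>
      show LinearMap.range (Matrix.toLin' (boundaryMatrix F K (p+1))) ≤
        LinearMap.ker (Matrix.toLin' (boundaryMatrix F K p))
      rintro x ⟨y, rfl⟩
      rw [LinearMap.mem_ker, ← LinearMap.comp_apply, ← Matrix.toLin'_mul, bM_mul_bM hK p]
      simp
  -- dimension count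
  have hquot := Submodule.finrank_quotient_add_finrank
    ((simplicialBoundaries F K i).comap (simplicialCycles F K i).subtype)
  have hcomap : Module.finrank F
      ((simplicialBoundaries F K i).comap (simplicialCycles F K i).subtype)
      = Module.finrank F (simplicialBoundaries F K i) :=
    LinearEquiv.finrank_eq (Submodule.comapSubtypeEquivOfLe hBZ)
  have hZcard : Module.finrank F (simplicialCycles F K i) + D.card ≤ (cellsOf K i).card := by
    cases i with
    | zero =>
      have hDe : D = ∅ := hD0 rfl
      rw [hDe, Finset.card_empty]
      have h1 : Module.finrank F (simplicialCycles F K 0) = (cellsOf K 0).card := by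
        rw [show simplicialCycles F K 0 = (⊤ : Submodule F ({σ // σ ∈ cellsOf K 0} → F)) from rfl,
          finrank_top, Module.finrank_fintype_fun_eq_card, Fintype.card_coe]
      omega
    | succ p =>
      have hrn := LinearMap.finrank_range_add_finrank_ker (Matrix.toLin' (boundaryMatrix F K p))
      have hdom : Module.finrank F ({σ // σ ∈ cellsOf K (p+1)} → F) = (cellsOf K (p+1)).card := by
        rw [Module.finrank_fintype_fun_eq_card, Fintype.card_coe]
      have hker : Module.finrank F (simplicialCycles F K (p+1))
          = Module.finrank F (LinearMap.ker (Matrix.toLin' (boundaryMatrix F K p))) := rfl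
      have hDle := hDcard p rfl
      rw [hdom] at hrn
      omega
  have hUB : U.card ≤ Module.finrank F (simplicialBoundaries F K i) := hUcard
  have hmain : Module.finrank F (simplicialHomology F K i)
      + Module.finrank F (simplicialBoundaries F K i)
      = Module.finrank F (simplicialCycles F K i) := by
    rw [← hcomap]; exact hquot
  omega

end Main

/-- (Discrete Morse inequalities.) For a discrete Morse function
on a finite simplicial complex `K` and any field `F`, the number of critical
`i`-cells is at least `bᵢ(K; F) = dim_F Hᵢ(K; F)`. -/
theorem discrete_morse_inequalities
    {V : Type} [DecidableEq V] [LinearOrder V] [Fintype V]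
    (K : Finset (Finset V)) (hK : IsComplex K)
    (f : Finset V → ℝ) (hf : IsDiscreteMorse K f)
    (F : Type) [Field F] (i : ℕ) :
    Module.finrank F (simplicialHomology F K i) ≤ numCritical K f i :=
  aux_main K hK f hf F i
end

section
/- In a discrete Morse function on a regular CW-complex, for each cell σ it is not possible that simultaneously there exists a coface τ > σ with f(τ) ≤ f(σ) and a face ν < σ with f(ν) ≥ f(σ). Consequently the regular cells appear in disjoint pairs, i.e., the gradient vector field V is a matching on the face poset. -/
/-- (Exclusion lemma.) For a discrete Morse function on a
finite simplicial complex, no cell can simultaneously have a codimension-one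
coface `τ` with `f τ ≤ f σ` and a codimension-one face `ν` with `f ν ≥ f σ`.
Consequently, the pairs of the gradient vector field `V` are disjoint, i.e. `V`
is a matching on the face poset. -/
theorem exclusion_lemma {V : Type} [DecidableEq V] [LinearOrder V]
    (K : Finset (Finset V)) (hK : IsComplex K)
    (f : Finset V → ℝ) (hf : IsDiscreteMorse K f) :
    (∀ σ ∈ K, ¬ ((∃ τ ∈ K, σ ⊆ τ ∧ τ.card = σ.card + 1 ∧ f τ ≤ f σ) ∧
        (∃ ν ∈ K, ν ⊆ σ ∧ ν.card + 1 = σ.card ∧ f σ ≤ f ν))) ∧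
    (∀ σ₁ τ₁ σ₂ τ₂ : Finset V, σ₁ ∈ K → τ₁ ∈ K → σ₂ ∈ K → τ₂ ∈ K →
      σ₁ ⊆ τ₁ → τ₁.card = σ₁.card + 1 → f τ₁ ≤ f σ₁ →
      σ₂ ⊆ τ₂ → τ₂.card = σ₂.card + 1 → f τ₂ ≤ f σ₂ →
      (σ₁ = σ₂ ∨ σ₁ = τ₂ ∨ τ₁ = σ₂ ∨ τ₁ = τ₂) → σ₁ = σ₂ ∧ τ₁ = τ₂) := by
  classical
  have part1 : ∀ σ ∈ K, ¬ ((∃ τ ∈ K, σ ⊆ τ ∧ τ.card = σ.card + 1 ∧ f τ ≤ f σ) ∧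
      (∃ ν ∈ K, ν ⊆ σ ∧ ν.card + 1 = σ.card ∧ f σ ≤ f ν)) := by
    rintro σ hσ ⟨⟨τ, hτK, hστ, hcard, hfτ⟩, ⟨ν, hνK, hνσ, hcard', hfν⟩⟩
    obtain ⟨a, ha⟩ : ∃ a, τ \ σ = {a} := Finset.card_eq_one.mp (by
      rw [Finset.card_sdiff_of_subset hστ, hcard]; omega)
    have haτ : a ∈ τ := by
      have : a ∈ τ \ σ := by rw [ha]; exact Finset.mem_singleton_self a
      exact (Finset.mem_sdiff.mp this).1
    have haσ : a ∉ σ := by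
      have : a ∈ τ \ σ := by rw [ha]; exact Finset.mem_singleton_self a
      exact (Finset.mem_sdiff.mp this).2
    set σ' := insert a ν with hσ'def
    have haν : a ∉ ν := fun h => haσ (hνσ h)
    have hcardσ' : σ'.card = σ.card := by
      rw [hσ'def, Finset.card_insert_of_notMem haν]; omega
    have hσ'τ : σ' ⊆ τ := Finset.insert_subset haτ ((hνσ.trans hστ))
    have hσ'ne : σ' ≠ σ := fun h => haσ (h ▸ Finset.mem_insert_self a ν)
    have hσ'K : σ' ∈ K := (hK τ hτK).2 σ' hσ'τ (by
      simp [hσ'def, Finset.insert_ne_empty])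
    by_cases h : f σ' ≤ f ν
    · have hν1 := (hf ν hνK).1
      have hσmem : σ ∈ K.filter (fun τ' => ν ⊆ τ' ∧ τ'.card = ν.card + 1 ∧ f τ' ≤ f ν) := by
        simp only [Finset.mem_filter]
        exact ⟨hσ, hνσ, hcard'.symm, hfν⟩
      have hσ'mem : σ' ∈ K.filter (fun τ' => ν ⊆ τ' ∧ τ'.card = ν.card + 1 ∧ f τ' ≤ f ν) := by
        simp only [Finset.mem_filter]
        exact ⟨hσ'K, Finset.subset_insert a ν, by omega, h⟩
      exact hσ'ne (Finset.card_le_one.mp hν1 _ hσ'mem _ hσmem)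
    · push_neg at h
      have hτ2 := (hf τ hτK).2
      have hσmem : σ ∈ K.filter (fun ν' => ν' ⊆ τ ∧ ν'.card + 1 = τ.card ∧ f τ ≤ f ν') := by
        simp only [Finset.mem_filter]
        exact ⟨hσ, hστ, hcard.symm, hfτ⟩
      have hσ'mem : σ' ∈ K.filter (fun ν' => ν' ⊆ τ ∧ ν'.card + 1 = τ.card ∧ f τ ≤ f ν') := by
        simp only [Finset.mem_filter]
        exact ⟨hσ'K, hσ'τ, by omega, hfτ.trans (hfν.trans h.le)⟩
      exact hσ'ne (Finset.card_le_one.mp hτ2 _ hσ'mem _ hσmem)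
  refine ⟨part1, ?_⟩
  intro σ₁ τ₁ σ₂ τ₂ hσ₁ hτ₁ hσ₂ hτ₂ hs₁ hc₁ hf₁ hs₂ hc₂ hf₂ hcase
  have hστ : ∀ σ τ τ' : Finset V, σ ∈ K → τ ∈ K → τ' ∈ K → σ ⊆ τ → τ.card = σ.card + 1 →
      f τ ≤ f σ → σ ⊆ τ' → τ'.card = σ.card + 1 → f τ' ≤ f σ → τ = τ' := by
    intro σ τ τ' hσ hτ hτ' h1 h2 h3 h4 h5 h6
    have := (hf σ hσ).1
    have hm : τ ∈ K.filter (fun τ'' => σ ⊆ τ'' ∧ τ''.card = σ.card + 1 ∧ f τ'' ≤ f σ) := by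
      simp only [Finset.mem_filter]; exact ⟨hτ, h1, h2, h3⟩
    have hm' : τ' ∈ K.filter (fun τ'' => σ ⊆ τ'' ∧ τ''.card = σ.card + 1 ∧ f τ'' ≤ f σ) := by
      simp only [Finset.mem_filter]; exact ⟨hτ', h4, h5, h6⟩
    exact Finset.card_le_one.mp this _ hm _ hm'
  rcases hcase with h | h | h | h
  · subst h
    exact ⟨rfl, hστ σ₁ τ₁ τ₂ hσ₁ hτ₁ hτ₂ hs₁ hc₁ hf₁ hs₂ hc₂ hf₂⟩
  · exact absurd ⟨⟨τ₁, hτ₁, hs₁, hc₁, hf₁⟩, ⟨σ₂, hσ₂, h ▸ hs₂, by rw [h]; omega, h ▸ hf₂⟩⟩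
      (part1 σ₁ hσ₁)
  · exact absurd ⟨⟨τ₂, hτ₂, h ▸ hs₂, by rw [h]; omega, h ▸ hf₂⟩, ⟨σ₁, hσ₁, h ▸ hs₁, by omega, h ▸ hf₁⟩⟩
      (part1 τ₁ hτ₁)
  · subst h
    have hσeq : σ₁ = σ₂ := by
      have := (hf τ₁ hτ₁).2
      have hm : σ₁ ∈ K.filter (fun ν => ν ⊆ τ₁ ∧ ν.card + 1 = τ₁.card ∧ f τ₁ ≤ f ν) := by
        simp only [Finset.mem_filter]; exact ⟨hσ₁, hs₁, hc₁.symm, hf₁⟩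
      have hm' : σ₂ ∈ K.filter (fun ν => ν ⊆ τ₁ ∧ ν.card + 1 = τ₁.card ∧ f τ₁ ≤ f ν) := by
        simp only [Finset.mem_filter]; exact ⟨hσ₂, hs₂, hc₂.symm, hf₂⟩
      exact Finset.card_le_one.mp this _ hm _ hm'
    exact ⟨hσeq, rfl⟩
end
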